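/- arXiv:math/0606590 — 2 statements merged into one kernel-verified Lean document; each statement's English description precedes it below -/
import Mathlib

section
/- Let f : ℝ → ℝ be convex on [m, M] with subdifferential function k. If x is a self-adjoint n×n complex matrix with spectrum in [m, M] and φ is a unital positive linear map on matrices, then for every s ∈ [m, M]: φ(f(x)) ≤ f(s)·1 − s·φ(k(x)) + φ(k(x)·x), where k(x) and k(x)·x are defined by the (Borel) functional calculus. -/
open Matrix
open scoped ComplexOrder Classical

/-- Functional calculus for (Hermitian) matrices via the spectral theorem. -/
noncomputable def fc {n : ℕ} (f : ℝ → ℝ) (A : Matrix (Fin n) (Fin n) ℂ) :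
    Matrix (Fin n) (Fin n) ℂ :=
  if h : A.IsHermitian then
    (h.eigenvectorUnitary : Matrix (Fin n) (Fin n) ℂ) *
      Matrix.diagonal (fun i => (f (h.eigenvalues i) : ℂ)) *
      (star h.eigenvectorUnitary : Matrix (Fin n) (Fin n) ℂ)
  else 0

/-- The Loewner order: `A ≤ B` iff `B - A` is positive semidefinite. -/
def Loewner {n : ℕ} (A B : Matrix (Fin n) (Fin n) ℂ) : Prop := (B - A).PosSemidef

/-- The operator norm of a matrix acting on Euclidean space. -/
noncomputable def opNorm {n : ℕ} (A : Matrix (Fin n) (Fin n) ℂ) : ℝ :=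
  ‖Matrix.toEuclideanCLM (𝕜 := ℂ) (n := Fin n) A‖

/-!
At every point `t` of the spectrum, the subgradient inequality at `t` evaluated at `s` reads
`f t ≤ f s - s * k t + k t * t`. The continuous functional calculus is monotone and linear, so
`f x ≤ f s - s • k x + k x * x`, and a positive linear map preserves this inequality.
-/

open scoped MatrixOrder

theorem cfc_le_of_subgradient {A : Type*} [Ring A] [StarRing A] [Algebra ℝ A]
    [TopologicalSpace A] [PartialOrder A] [StarOrderedRing A]
    [ContinuousFunctionalCalculus ℝ A IsSelfAdjoint] [NonnegSpectrumClass ℝ A]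
    {a : A} {f k : ℝ → ℝ} {s : ℝ}
    (hf : ContinuousOn f (spectrum ℝ a)) (hk : ContinuousOn k (spectrum ℝ a))
    (hsub : ∀ t ∈ spectrum ℝ a, f t + k t * (s - t) ≤ f s) (ha : IsSelfAdjoint a := by cfc_tac) :
    cfc f a ≤ algebraMap ℝ A (f s) - s • cfc k a + cfc (fun t => k t * t) a :=
  calc cfc f a ≤ cfc (fun t => f s - s * k t + k t * t) a :=
        cfc_mono fun t ht => by linarith [hsub t ht]
    _ = _ := by rw [cfc_add .., cfc_sub .., cfc_const_mul .., cfc_const ..]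

theorem Matrix.IsHermitian.fc_eq_cfc {n : ℕ} {x : Matrix (Fin n) (Fin n) ℂ} (hx : x.IsHermitian)
    (f : ℝ → ℝ) : fc f x = cfc f x := by
  rw [hx.cfc_eq, Matrix.IsHermitian.cfc, fc, dif_pos hx]
  rfl

theorem Loewner.map {n : ℕ} {A B : Matrix (Fin n) (Fin n) ℂ}
    {φ : Matrix (Fin n) (Fin n) ℂ →ₗ[ℂ] Matrix (Fin n) (Fin n) ℂ}
    (hφ : ∀ A, A.PosSemidef → (φ A).PosSemidef) (h : Loewner A B) : Loewner (φ A) (φ B) := by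
  unfold Loewner
  rw [← map_sub]
  exact hφ _ h

theorem stmt_2_general {n : ℕ} (m M : ℝ) (f k : ℝ → ℝ)
    (hk : ∀ y ∈ Set.Icc m M, ∀ t ∈ Set.Icc m M, f y + k y * (t - y) ≤ f t)
    (x : Matrix (Fin n) (Fin n) ℂ) (hx : x.IsHermitian)
    (hspec : ∀ j, hx.eigenvalues j ∈ Set.Icc m M)
    (φ : Matrix (Fin n) (Fin n) ℂ →ₗ[ℂ] Matrix (Fin n) (Fin n) ℂ)
    (hφ : ∀ A, A.PosSemidef → (φ A).PosSemidef) (hunital : φ 1 = 1)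
    (s : ℝ) (hs : s ∈ Set.Icc m M) :
    Loewner (φ (fc f x))
      ((f s : ℝ) • (1 : Matrix (Fin n) (Fin n) ℂ) - (s : ℝ) • φ (fc k x) +
        φ (fc (fun t => k t * t) x)) := by
  have hcont (g : ℝ → ℝ) : ContinuousOn g (spectrum ℝ x) := x.finite_real_spectrum.continuousOn g
  have hsub : ∀ t ∈ spectrum ℝ x, f t + k t * (s - t) ≤ f s := by
    rw [hx.spectrum_real_eq_range_eigenvalues]
    rintro _ ⟨j, rfl⟩
    exact hk _ (hspec j) s hs
  have hle := Loewner.map hφ (cfc_le_of_subgradient (hcont f) (hcont k) hsub hx.isSelfAdjoint)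
  simpa only [hx.fc_eq_cfc, Algebra.algebraMap_eq_smul_one, map_add, map_sub, LinearMap.map_smul_of_tower,
    hunital] using hle

theorem stmt_2 {n : ℕ} (m M : ℝ) (hmM : m < M) (f k : ℝ → ℝ)
    (hf : ConvexOn ℝ (Set.Icc m M) f)
    (hk : ∀ y ∈ Set.Icc m M, ∀ t ∈ Set.Icc m M, f y + k y * (t - y) ≤ f t)
    (x : Matrix (Fin n) (Fin n) ℂ) (hx : x.IsHermitian)
    (hspec : ∀ j, hx.eigenvalues j ∈ Set.Icc m M)
    (φ : Matrix (Fin n) (Fin n) ℂ →ₗ[ℂ] Matrix (Fin n) (Fin n) ℂ)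
    (hφ : ∀ A, A.PosSemidef → (φ A).PosSemidef) (hunital : φ 1 = 1)
    (s : ℝ) (hs : s ∈ Set.Icc m M) :
    Loewner (φ (fc f x))
      ((f s : ℝ) • (1 : Matrix (Fin n) (Fin n) ℂ) - (s : ℝ) • φ (fc k x) +
        φ (fc (fun t => k t * t) x)) :=
  stmt_2_general m M f k hk x hx hspec φ hφ hunital s hs
end

section
/- Let f : [m, M] → ℝ be convex, g : [m, M] → ℝ arbitrary, and F : ℝ × ℝ → ℝ bounded and monotone increasing in the first variable. Let x₁, ..., xₙ be Hermitian matrices with spectra in [m, M], w₁, ..., wₙ ≥ 0 with ∑ wᵢ = 1, and let τ denote the normalized trace. Then F(∑ᵢ wᵢ τ(f(xᵢ)), g(∑ᵢ wᵢ τ(xᵢ))) ≤ max_{m ≤ z ≤ M} F(α_f z + β_f, g(z)), where α_f = (f(M) − f(m))/(M − m) and β_f = (M f(m) − m f(M))/(M − m). -/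
open Matrix
open scoped ComplexOrder Classical

/-!
The normalized trace of a Hermitian matrix is the mean of its eigenvalues, and that of `f(x)` is
the mean of `f` at those eigenvalues. On `[m, M]` the convex `f` lies below its chord
`z ↦ α_f z + β_f`, and averaging an affine function commutes with evaluating it, so
`∑ wᵢ τ(f(xᵢ)) ≤ α_f z₀ + β_f` with `z₀ = ∑ wᵢ τ(xᵢ) ∈ [m, M]`. Monotonicity of `F` in its first
argument and boundedness of `F` (so that `sSup` is a genuine supremum) finish the proof.
-/

open Finset
open scoped BigOperators

lemma trace_unitary_mul_diagonal_mul_star {ι R : Type*} [Fintype ι] [DecidableEq ι] [CommRing R]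
    [StarRing R] (U : unitary (Matrix ι ι R)) (d : ι → R) :
    trace ((U : Matrix ι ι R) * diagonal d * (star U : Matrix ι ι R)) = ∑ i, d i := by
  rw [trace_mul_cycle, Unitary.coe_star_mul_self, one_mul, trace_diagonal]

section NormalizedTrace

variable {n : ℕ} {A : Matrix (Fin n) (Fin n) ℂ}

lemma Matrix.IsHermitian.re_trace_div_eq_expect_eigenvalues (hA : A.IsHermitian) :
    (trace A).re / n = 𝔼 j, hA.eigenvalues j := by
  simp [hA.trace_eq_sum_eigenvalues, Fintype.expect_eq_sum_div_card]

lemma re_trace_fc_div_eq_expect (f : ℝ → ℝ) (hA : A.IsHermitian) :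
    (trace (fc f A)).re / n = 𝔼 j, f (hA.eigenvalues j) := by
  simp [fc, hA, trace_unitary_mul_diagonal_mul_star, Fintype.expect_eq_sum_div_card]

end NormalizedTrace

lemma ConvexOn.le_chord {m M : ℝ} (hmM : m < M) {f : ℝ → ℝ} (hf : ConvexOn ℝ (Set.Icc m M) f)
    {z : ℝ} (hz : z ∈ Set.Icc m M) :
    f z ≤ (f M - f m) / (M - m) * z + (M * f m - m * f M) / (M - m) := by
  have hMm : 0 < M - m := sub_pos.2 hmM
  have hconv := hf.2 (Set.left_mem_Icc.2 hmM.le) (Set.right_mem_Icc.2 hmM.le)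
    (div_nonneg (sub_nonneg.2 hz.2) hMm.le) (div_nonneg (sub_nonneg.2 hz.1) hMm.le)
    (by field_simp; ring)
  have hz_comb : ((M - z) / (M - m)) • m + ((z - m) / (M - m)) • M = z := by
    simp only [smul_eq_mul]; field_simp; ring
  rw [hz_comb] at hconv
  refine hconv.trans_eq ?_
  simp only [smul_eq_mul]
  field_simp
  ring

lemma ConvexOn.expect_le_chord {ι : Type*} [Fintype ι] [Nonempty ι] {m M : ℝ} (hmM : m < M)
    {f : ℝ → ℝ} (hf : ConvexOn ℝ (Set.Icc m M) f) {a : ι → ℝ} (ha : ∀ j, a j ∈ Set.Icc m M) :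
    𝔼 j, f (a j) ≤ (f M - f m) / (M - m) * 𝔼 j, a j + (M * f m - m * f M) / (M - m) := by
  calc 𝔼 j, f (a j)
      ≤ 𝔼 j, ((f M - f m) / (M - m) * a j + (M * f m - m * f M) / (M - m)) :=
        expect_le_expect fun j _ => hf.le_chord hmM (ha j)
    _ = _ := by rw [expect_add_distrib, ← mul_expect, Fintype.expect_const]

lemma expect_mem_Icc {ι : Type*} [Fintype ι] [Nonempty ι] {m M : ℝ} {a : ι → ℝ}
    (ha : ∀ j, a j ∈ Set.Icc m M) : 𝔼 j, a j ∈ Set.Icc m M :=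
  ⟨le_expect univ_nonempty fun j _ => (ha j).1, expect_le univ_nonempty fun j _ => (ha j).2⟩

lemma sum_mul_mul_add_of_sum_eq_one {ι R : Type*} [CommSemiring R] (s : Finset ι) (w t : ι → R)
    (hw : ∑ i ∈ s, w i = 1) (α β : R) :
    ∑ i ∈ s, w i * (α * t i + β) = α * ∑ i ∈ s, w i * t i + β := by
  simp only [mul_add, sum_add_distrib, ← sum_mul, hw, one_mul, mul_sum]
  congr 1
  exact sum_congr rfl fun i _ => by ring

theorem stmt_10 {n N : ℕ} (hn : 0 < n) (m M : ℝ) (hmM : m < M) (f g : ℝ → ℝ)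
    (hf : ConvexOn ℝ (Set.Icc m M) f)
    (F : ℝ → ℝ → ℝ) (hFb : ∃ C, ∀ u v, |F u v| ≤ C)
    (hFm : ∀ v, Monotone fun u => F u v)
    (x : Fin N → Matrix (Fin n) (Fin n) ℂ) (hx : ∀ i, (x i).IsHermitian)
    (hspec : ∀ i j, (hx i).eigenvalues j ∈ Set.Icc m M)
    (w : Fin N → ℝ) (hw : ∀ i, 0 ≤ w i) (hw1 : ∑ i, w i = 1) :
    F (∑ i, w i * ((Matrix.trace (fc f (x i))).re / n))
        (g (∑ i, w i * ((Matrix.trace (x i)).re / n))) ≤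
      sSup ((fun z => F ((f M - f m) / (M - m) * z + (M * f m - m * f M) / (M - m))
        (g z)) '' Set.Icc m M) := by
  have : Nonempty (Fin n) := ⟨⟨0, hn⟩⟩
  have hτ_mem (i : Fin N) : (trace (x i)).re / n ∈ Set.Icc m M := by
    rw [(hx i).re_trace_div_eq_expect_eigenvalues]
    exact expect_mem_Icc (hspec i)
  have hτf_le (i : Fin N) : (trace (fc f (x i))).re / n ≤
      (f M - f m) / (M - m) * ((trace (x i)).re / n) + (M * f m - m * f M) / (M - m) := by
    rw [re_trace_fc_div_eq_expect f (hx i), (hx i).re_trace_div_eq_expect_eigenvalues]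
    exact hf.expect_le_chord hmM (hspec i)
  set z₀ := ∑ i, w i * ((trace (x i)).re / n)
  have hz₀ : z₀ ∈ Set.Icc m M :=
    (convex_Icc m M).sum_mem (fun i _ => hw i) hw1 fun i _ => hτ_mem i
  have hle : ∑ i, w i * ((trace (fc f (x i))).re / n) ≤
      (f M - f m) / (M - m) * z₀ + (M * f m - m * f M) / (M - m) :=
    (sum_le_sum fun i _ => mul_le_mul_of_nonneg_left (hτf_le i) (hw i)).trans_eq
      (sum_mul_mul_add_of_sum_eq_one _ _ _ hw1 _ _)
  obtain ⟨C, hC⟩ := hFb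
  exact (hFm _ hle).trans <| le_csSup ⟨C, by rintro _ ⟨z, -, rfl⟩; exact (abs_le.1 (hC _ _)).2⟩
    ⟨z₀, hz₀, rfl⟩
end
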